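/- arXiv:1709.02766 — 3 statements merged into one kernel-verified Lean document; each statement's English description precedes it below -/
import Mathlib

section
/- Every finitely generated commutative ring is residually finite as a ring, i.e., for every nonzero element a there is a ring homomorphism to a finite ring sending a to a nonzero element. -/
/-!
If `a ≠ 0` in a noetherian ring, take a maximal ideal `m` containing the annihilator of `a`;
Krull's intersection theorem then gives `a ∉ m ^ n` for some `n`. For a finitely generated
ring, `A ⧸ m` is a field of finite type over the Jacobson ring `ℤ`, hence a finite field
(Zariski's lemma), and so `A ⧸ m ^ n` is finite and detects `a`.
-/

instance Int.isJacobsonRing : IsJacobsonRing ℤ := by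
  refine isJacobsonRing_iff_prime_eq.mpr fun {P} hP => ?_
  by_cases hP0 : P = ⊥
  · subst hP0
    refine le_antisymm (fun x hx => ?_) Ideal.le_jacobson
    -- `x * x + 1` is a unit, i.e. `±1`, which forces `x = 0`.
    have hunit := Int.isUnit_iff.mp (Ideal.mem_jacobson_bot.mp hx x)
    rw [Ideal.mem_bot]
    rcases hunit with h | h <;> nlinarith
  · have := IsPrime.to_maximal_ideal hP0
    exact Ideal.jacobson_eq_self_of_isMaximal

theorem finite_of_finiteType_int (K : Type*) [Field K] [Algebra ℤ K] [Algebra.FiniteType ℤ K] :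
    Finite K := by
  -- `K` is finite over `ℤ`, so the kernel of `ℤ → K` is maximal, hence nonzero, and
  -- `K` is a finitely generated torsion group.
  have hfin := finite_of_finite_type_of_isJacobsonRing ℤ K
  have hker := Algebra.ker_algebraMap_isMaximal_of_isIntegral ℤ K
  obtain ⟨n, hn, hn0⟩ := Submodule.exists_mem_ne_zero_of_ne_bot
    (Ring.ne_bot_of_isMaximal_of_not_isField hker Int.not_isField)
  refine @Module.finite_of_fg_torsion K _ Algebra.toModule hfin fun x =>
    ⟨⟨n, mem_nonZeroDivisors_of_ne_zero hn0⟩, ?_⟩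
  simp only [Submonoid.mk_smul, Algebra.smul_def, RingHom.mem_ker.mp hn, zero_mul]

theorem Ideal.finite_quotient_of_isMaximal_of_finiteType_int {A : Type*} [CommRing A]
    [Algebra.FiniteType ℤ A] (m : Ideal A) [m.IsMaximal] : Finite (A ⧸ m) := by
  have : Algebra.FiniteType ℤ (A ⧸ m) :=
    .of_surjective (Ideal.Quotient.mkₐ ℤ m) (Ideal.Quotient.mkₐ_surjective ℤ m)
  let := Ideal.Quotient.field m
  exact finite_of_finiteType_int (A ⧸ m)

theorem Ideal.exists_isMaximal_notMem_pow {R : Type*} [CommRing R] [IsNoetherianRing R] {a : R}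
    (ha : a ≠ 0) : ∃ m : Ideal R, m.IsMaximal ∧ ∃ n, a ∉ m ^ n := by
  have hann : (R ∙ a).annihilator ≠ ⊤ := fun h => ha <| by
    have h1 : (1 : R) ∈ (R ∙ a).annihilator := h ▸ Submodule.mem_top
    simpa using (Submodule.mem_annihilator_span_singleton a 1).mp h1
  obtain ⟨m, hm, hle⟩ := Ideal.exists_le_maximal _ hann
  refine ⟨m, hm, ?_⟩
  by_contra! h
  have hKrull : a ∈ ⨅ i, m ^ i • (⊤ : Submodule R R) := by
    simpa only [Submodule.mem_iInf, smul_eq_mul, Ideal.mul_top] using h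
  -- Krull: `r • a = a` for some `r ∈ m`, so `1 - r` annihilates `a` and lies in `m`.
  obtain ⟨r, hr⟩ := (m.mem_iInf_smul_pow_eq_bot_iff a).mp hKrull
  have h1r : 1 - (r : R) ∈ m := hle <| (Submodule.mem_annihilator_span_singleton _ _).mpr <| by
    rw [sub_smul, hr, one_smul, sub_self]
  exact hm.ne_top <| (m.eq_top_iff_one).mpr <| by simpa using m.add_mem h1r r.2

/-- Every finitely generated commutative ring is residually finite as a ring:
for every nonzero element `a` there is a ring homomorphism to a finite ring
sending `a` to a nonzero element. -/
theorem fg_commRing_residually_finite {A : Type*} [CommRing A]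
    (hfg : Algebra.FiniteType ℤ A) (a : A) (ha : a ≠ 0) :
    ∃ (B : Type) (_ : CommRing B) (_ : Finite B) (φ : A →+* B), φ a ≠ 0 := by
  have : IsNoetherianRing A := Algebra.FiniteType.isNoetherianRing ℤ A
  obtain ⟨m, hm, n, han⟩ := Ideal.exists_isMaximal_notMem_pow ha
  have : Finite (A ⧸ m) := m.finite_quotient_of_isMaximal_of_finiteType_int
  have : Finite (A ⧸ m ^ n) := Ideal.finite_quotient_pow (IsNoetherian.noetherian m) n
  have : Small.{0} (A ⧸ m ^ n) := Countable.toSmall _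
  refine ⟨Shrink.{0} (A ⧸ m ^ n), inferInstance, .of_equiv _ (equivShrink _),
    (Shrink.ringEquiv _).symm.toRingHom.comp (Ideal.Quotient.mk _), ?_⟩
  simpa [Ideal.Quotient.eq_zero_iff_mem] using han
end

section
/- Let Γ be a group, h ∈ Γ, and S = h^Γ ∪ (h^{-1})^Γ. If h is not contained in any finite normal subgroup of Γ, then |[S]^D| > D for every D ≥ 1. -/
/-- `[S]^n`: the set of products of `n` elements, each taken from `S ∪ {1}`. -/
def setPow {G : Type*} [Group G] (S : Set G) (n : ℕ) : Set G :=
  { g | ∃ f : Fin n → G, (∀ i, f i ∈ S ∪ {1}) ∧ g = (List.ofFn f).prod }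

/-!
The subgroup generated by `T = S ∪ {1}` contains the normal closure of `h`, so it is infinite.
If `T ^ n = T ^ (n + 1)` for some `n`, the chain of powers stabilises and `T ^ n` is that whole
infinite subgroup. Hence, as long as `T ^ D` is finite, `T ^ 0 ⊂ T ^ 1 ⊂ ⋯ ⊂ T ^ D` and
`|T ^ D| ≥ D + 1`.
-/

open Pointwise Subgroup Group

section

variable {G : Type*} [Group G]

lemma setPow_eq_pow (S : Set G) (n : ℕ) : setPow S n = (S ∪ {1}) ^ n := by
  ext g
  simp only [setPow, Set.mem_ofPred_eq, Set.mem_pow]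
  constructor
  · rintro ⟨f, hf, rfl⟩
    exact ⟨fun i => ⟨f i, hf i⟩, rfl⟩
  · rintro ⟨f, rfl⟩
    exact ⟨fun i => f i, fun i => (f i).2, rfl⟩

lemma Set.add_one_le_ncard_pow {X : Set G} (hX₁ : (1 : G) ∈ X)
    (hX : (closure X : Set G).Infinite) {n : ℕ} (hfin : (X ^ n).Finite) :
    n + 1 ≤ (X ^ n).ncard := by
  classical
  obtain rfl | hn := eq_or_ne n 0
  · simp [← Set.singleton_one]
  lift X to Finset G using hfin.subset (Set.subset_pow hX₁ hn)
  rw [← Finset.coe_pow, Set.ncard_coe_finset]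
  exact Finset.add_one_le_card_pow hX₁ hX n

lemma Subgroup.infinite_closure_of_conjugatesOf_subset {h : G}
    (hh : ∀ N : Subgroup G, N.Normal → (N : Set G).Finite → h ∉ N) {s : Set G}
    (hs : conjugatesOf h ⊆ s) : (closure s : Set G).Infinite := fun hfin =>
  hh (normalClosure {h}) inferInstance
    (hfin.subset (closure_mono (by simpa [conjugatesOfSet] using hs)))
    (subset_normalClosure rfl)

end

/-- If `h` is not contained in any finite normal subgroup of `Γ`, then
`|[S]^D| > D` for every `D ≥ 1`, where `S = h^Γ ∪ (h⁻¹)^Γ`. -/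
theorem setPow_card_gt {G : Type*} [Group G] (h : G)
    (S : Set G) (hS : S = {x | IsConj h x} ∪ {x | IsConj h⁻¹ x})
    (hnot : ∀ N : Subgroup G, N.Normal → (N : Set G).Finite → h ∉ N) :
    ∀ D : ℕ, 1 ≤ D → ∀ hfin : (setPow S D).Finite, D < (setPow S D).ncard := by
  intro D _ hfin
  rw [setPow_eq_pow] at hfin ⊢
  have hconj : conjugatesOf h ⊆ S ∪ {1} := by
    rw [hS]
    exact Set.subset_union_left.trans Set.subset_union_left
  exact Set.add_one_le_ncard_pow (X := S ∪ {1}) (Or.inr rfl)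
    (infinite_closure_of_conjugatesOf_subset hnot hconj) hfin
end

section
/- The groups C_25 ⋊_{ρ_6} Z and C_25 ⋊_{ρ_11} Z are not isomorphic. -/
/-!
Call `g` a power generator of exponent `m` of a group `G` if every element of `G` is a torsion
element times a power of `g`, and conjugation by `g` raises every torsion element to the `m`-th
power. Having one is invariant under isomorphism. In `C₂₅ ⋊_{ρ_m} ℤ` the generator of `ℤ` is a power
generator of exponent `m`, while any power generator maps to `±1` in `ℤ`, so its exponent is `m` or
`m⁻¹` modulo `25`; and `6 ≢ 11`, `6 · 11 ≢ 1 (mod 25)`. Restricting to generators is essential: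
`11³ ≡ 6 (mod 25)`.
-/

/-- The automorphism of the (multiplicatively written) cyclic group of order 25 sending
every element to its `m`-th power, for `m` coprime to 25. -/
def powAut (m : ℕ) (hm : Nat.Coprime m 25) : MulAut (Multiplicative (ZMod 25)) :=
  AddEquiv.toMultiplicative
    (DistribMulAction.toAddAut ((ZMod 25)ˣ) (ZMod 25) (ZMod.unitOfCoprime m hm))

/-- The semidirect product `C_25 ⋊_{ρ_m} ℤ`, where `ρ_m(1)` is the `m`-th power map. -/
abbrev cyclicSemidirect (m : ℕ) (hm : Nat.Coprime m 25) :=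
  Multiplicative (ZMod 25) ⋊[zpowersHom (MulAut (Multiplicative (ZMod 25))) (powAut m hm)]
    Multiplicative ℤ

open SemidirectProduct Multiplicative

def HasPowGenerator (G : Type*) [Group G] (m : ℤ) : Prop :=
  ∃ g : G, (∀ h : G, ∃ x : G, ∃ n : ℤ, IsOfFinOrder x ∧ h = x * g ^ n) ∧
    ∀ x : G, IsOfFinOrder x → g * x * g⁻¹ = x ^ m

theorem HasPowGenerator.of_mulEquiv {G H : Type*} [Group G] [Group H] {m : ℤ} (e : G ≃* H)
    (hG : HasPowGenerator G m) : HasPowGenerator H m := by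
  obtain ⟨g, hgen, hconj⟩ := hG
  refine ⟨e g, fun h => ?_, fun y hy => ?_⟩
  · obtain ⟨x, n, hx, hxn⟩ := hgen (e.symm h)
    exact ⟨e x, n, e.toMonoidHom.isOfFinOrder hx, by
      rw [← map_zpow, ← map_mul, ← hxn, e.apply_symm_apply]⟩
  · simpa using congrArg e (hconj (e.symm y) (e.symm.toMonoidHom.isOfFinOrder hy))

namespace SemidirectProduct

variable {N G : Type*} [Group N] [Group G] {φ : G →* MulAut N}

theorem right_eq_one_of_isOfFinOrder [IsMulTorsionFree G] {g : N ⋊[φ] G}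
    (hg : IsOfFinOrder g) : g.right = 1 :=
  (rightHom.isOfFinOrder hg).eq_one'

theorem eq_inl_of_isOfFinOrder [IsMulTorsionFree G] {g : N ⋊[φ] G} (hg : IsOfFinOrder g) :
    g = inl g.left := by
  ext <;> simp [right_eq_one_of_isOfFinOrder hg]

theorem isOfFinOrder_inl [Finite N] (n : N) : IsOfFinOrder (inl n : N ⋊[φ] G) :=
  inl.isOfFinOrder (isOfFinOrder_of_finite n)

theorem mul_inl_mul_inv {N : Type*} [CommGroup N] {φ : G →* MulAut N} (g : N ⋊[φ] G) (n : N) :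
    g * inl n * g⁻¹ = inl (φ g.right n) := by
  ext
  · simp [mul_comm]
  · simp

end SemidirectProduct

theorem powAut_apply (m : ℕ) (hm : Nat.Coprime m 25) (x : Multiplicative (ZMod 25)) :
    powAut m hm x = x ^ m := by
  rw [← ofAdd_toAdd (x ^ m), toAdd_pow, nsmul_eq_mul]
  simp [powAut, Units.smul_def]

theorem hasPowGenerator_cyclicSemidirect (m : ℕ) (hm : Nat.Coprime m 25) :
    HasPowGenerator (cyclicSemidirect m hm) m := by
  refine ⟨inr (ofAdd 1), fun h => ⟨inl h.left, h.right.toAdd, isOfFinOrder_inl _, ?_⟩,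
    fun x hx => ?_⟩
  · rw [← map_zpow, ← ofAdd_zsmul, smul_eq_mul, mul_one, ofAdd_toAdd, inl_left_mul_inr_right]
  · rw [eq_inl_of_isOfFinOrder hx, mul_inl_mul_inv, right_inr, zpowersHom_apply, toAdd_ofAdd,
      zpow_one, powAut_apply, zpow_natCast, map_pow]

theorem eq_or_mul_eq_one_of_hasPowGenerator {m : ℕ} {hm : Nat.Coprime m 25} {k : ℤ}
    (h : HasPowGenerator (cyclicSemidirect m hm) k) :
    (k : ZMod 25) = m ∨ (k : ZMod 25) * m = 1 := by
  obtain ⟨g, hgen, hconj⟩ := h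
  have hunit : IsUnit g.right.toAdd := by
    obtain ⟨x, n, hx, hxn⟩ := hgen (inr (ofAdd 1))
    have h1 := congrArg rightHom hxn
    rw [map_mul, map_zpow, rightHom_inr, rightHom_eq_right, right_eq_one_of_isOfFinOrder hx,
      one_mul] at h1
    refine .of_mul_eq_one n ?_
    simpa [mul_comm] using (congrArg toAdd h1).symm
  have key := hconj (inl (ofAdd 1)) (isOfFinOrder_inl _)
  rw [mul_inl_mul_inv, ← map_zpow, inl_injective.eq_iff, zpowersHom_apply] at key
  rcases Int.isUnit_iff.1 hunit with h | h <;> rw [h] at key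
  · left
    rw [zpow_one, powAut_apply] at key
    simpa using (congrArg toAdd key).symm
  · right
    have key' := congrArg (powAut m hm) key
    rw [zpow_neg_one, MulAut.apply_inv_self, powAut_apply] at key'
    simpa [mul_comm] using (congrArg toAdd key').symm

/-- `C_25 ⋊_{ρ_6} ℤ` and `C_25 ⋊_{ρ_11} ℤ` are not isomorphic. -/
theorem semidirect_not_iso :
    IsEmpty ((cyclicSemidirect 6 (by decide)) ≃* (cyclicSemidirect 11 (by decide))) := by
  refine ⟨fun e => ?_⟩
  have h11 := eq_or_mul_eq_one_of_hasPowGenerator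
    ((hasPowGenerator_cyclicSemidirect 6 _).of_mulEquiv e)
  exact absurd h11 (by decide)
end
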